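/- Let n = 2m and K_n be the number of returns to the origin of symmetric simple random walk up to time n. Then E[K_n] = (2m+1)·2^{-2m}·C(2m,m) - 1, and consequently E[K_n] ≤ sqrt(2n/π). -/

import Mathlib

/-!
The law of `K_n` is `P(K_n = r) = C(2m-r, m) 2^r / 4^m`, and with `a_r = C(2m-r, m) 2^r` the
quantity `∑_{r<k} (r+1) a_r + (2m+1-k) a_k` does not depend on `k`, because
`(2m-k) C(2m-k-1, m) = (m-k) C(2m-k, m)`; comparing `k = 0` with `k = m` gives
`∑ (r+1) a_r = (2m+1) C(2m, m)`. Together with `∑ a_r = 4^m` (obtained from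
`∑_{i ≤ m} C(2m+1, i) = 4^m` by peeling off Pascal's rule from partial row sums) this is the
formula for `E[K_n]`.
For the bound, the lower estimate for the Wallis product, `W m ≥ (2m+1)/(2m+2) · π/2`, with
`W m = 1 / ((C(2m,m)/4^m)^2 (2m+1))`, yields `(C(2m,m)/4^m)^2 · π m ≤ 1`.
-/

/-- The pmf of the number of returns to the origin of simple random walk up to time `2m`:
`p r = 2^{-(2m-r)} * C(2m-r, m)`. -/
noncomputable def returnsPMF (m r : ℕ) : ℝ := (Nat.choose (2*m - r) m : ℝ) / 2^(2*m - r)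

open Finset Real Nat

namespace Nat

theorem sum_range_succ_choose_succ (n j : ℕ) :
    ∑ i ∈ range (j + 1), (n + 1).choose i = 2 * ∑ i ∈ range j, n.choose i + n.choose j := by
  induction j with
  | zero => simp
  | succ j ih =>
    rw [sum_range_succ, ih, choose_succ_succ, sum_range_succ]
    ring

theorem sum_range_choose_two_mul_sub_mul_two_pow_add {m k : ℕ} (hk : k ≤ m + 1) :
    ∑ r ∈ range k, (2 * m - r).choose m * 2 ^ r
      + 2 ^ k * ∑ i ∈ range (m + 1 - k), (2 * m + 1 - k).choose i = 4 ^ m := by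
  induction k with
  | zero => simpa using sum_range_choose_halfway m
  | succ k ih =>
    have hsymm : (2 * m - k).choose (m - k) = (2 * m - k).choose m := by
      rw [← choose_symm (by omega : m ≤ 2 * m - k)]
      congr 1
      omega
    rw [← ih (by omega), sum_range_succ, show m + 1 - k = m - k + 1 by omega,
      show 2 * m + 1 - k = 2 * m - k + 1 by omega, sum_range_succ_choose_succ, hsymm,
      show m + 1 - (k + 1) = m - k by omega, show 2 * m + 1 - (k + 1) = 2 * m - k by omega]
    ring

theorem sum_range_choose_two_mul_sub_mul_two_pow (m : ℕ) :
    ∑ r ∈ range (m + 1), (2 * m - r).choose m * 2 ^ r = 4 ^ m := by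
  simpa using sum_range_choose_two_mul_sub_mul_two_pow_add (le_refl (m + 1))

theorem sum_range_succ_mul_choose_two_mul_sub_mul_two_pow_add {m k : ℕ} (hk : k ≤ m) :
    ∑ r ∈ range k, (r + 1) * (2 * m - r).choose m * 2 ^ r
      + (2 * m + 1 - k) * (2 * m - k).choose m * 2 ^ k = (2 * m + 1) * (2 * m).choose m := by
  induction k with
  | zero => simp
  | succ k ih =>
    have habsorb : (2 * m - k) * (2 * m - (k + 1)).choose m = (m - k) * (2 * m - k).choose m := by
      have h := choose_mul_succ_eq (2 * m - (k + 1)) m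
      rw [show 2 * m - (k + 1) + 1 = 2 * m - k by omega,
        show 2 * m - k - m = m - k by omega] at h
      rw [mul_comm, h, mul_comm]
    rw [← ih (by omega), sum_range_succ, show 2 * m + 1 - (k + 1) = 2 * m - k by omega,
      show 2 * m + 1 - k = (k + 1) + 2 * (m - k) by omega, habsorb]
    ring

theorem sum_range_succ_mul_choose_two_mul_sub_mul_two_pow (m : ℕ) :
    ∑ r ∈ range (m + 1), (r + 1) * (2 * m - r).choose m * 2 ^ r
      = (2 * m + 1) * (2 * m).choose m := by
  rw [← sum_range_succ_mul_choose_two_mul_sub_mul_two_pow_add (le_refl m), sum_range_succ,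
    show 2 * m + 1 - m = m + 1 by omega]

end Nat

theorem returnsPMF_eq_mul_two_pow_div_four_pow {m r : ℕ} (hr : r ≤ 2 * m) :
    returnsPMF m r = (2 * m - r).choose m * 2 ^ r / 4 ^ m := by
  rw [returnsPMF, show (4 : ℝ) ^ m = 2 ^ (2 * m - r) * 2 ^ r by
    rw [← pow_add, Nat.sub_add_cancel hr, pow_mul]; norm_num]
  field_simp

theorem sum_range_returnsPMF (m : ℕ) : ∑ r ∈ range (m + 1), returnsPMF m r = 1 := by
  rw [sum_congr rfl fun r hr => returnsPMF_eq_mul_two_pow_div_four_pow (by grind),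
    ← sum_div, div_eq_one_iff_eq (by positivity)]
  exact_mod_cast sum_range_choose_two_mul_sub_mul_two_pow m

theorem sum_range_succ_mul_returnsPMF (m : ℕ) :
    ∑ r ∈ range (m + 1), ((r : ℝ) + 1) * returnsPMF m r
      = (2 * m + 1) * (2 * m).choose m / 2 ^ (2 * m) := by
  rw [sum_congr rfl fun r hr => by
      rw [returnsPMF_eq_mul_two_pow_div_four_pow (by grind), mul_div_assoc', ← mul_assoc],
    ← sum_div, pow_mul, show (2 : ℝ) ^ 2 = 4 by norm_num]
  congr 1
  exact_mod_cast sum_range_succ_mul_choose_two_mul_sub_mul_two_pow m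

theorem Real.Wallis.W_eq_one_div_centralBinom_div_four_pow_sq (n : ℕ) :
    Wallis.W n = 1 / (((centralBinom n : ℝ) / 4 ^ n) ^ 2 * (2 * n + 1)) := by
  have hfact : ((2 * n)! : ℝ) = centralBinom n * n ! ^ 2 := by
    rw [centralBinom_eq_two_mul_choose,
      ← choose_mul_factorial_mul_factorial (by omega : n ≤ 2 * n), show 2 * n - n = n by omega]
    push_cast
    ring
  have hpow : (2 : ℝ) ^ (4 * n) = (4 ^ n) ^ 2 := by
    rw [← pow_mul, show (4 : ℝ) = 2 ^ 2 by norm_num, ← pow_mul]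
    ring_nf
  rw [Wallis.W_eq_factorial_ratio, hfact, hpow]
  field_simp

theorem sq_centralBinom_div_four_pow_mul_le_one (n : ℕ) :
    ((centralBinom n : ℝ) / 4 ^ n) ^ 2 * (π * n) ≤ 1 := by
  have hcb : 0 < (centralBinom n : ℝ) := by exact_mod_cast centralBinom_pos n
  have hW := Wallis.le_W n
  rw [Wallis.W_eq_one_div_centralBinom_div_four_pow_sq, le_div_iff₀ (by positivity)] at hW
  set x := (centralBinom n : ℝ) / 4 ^ n
  have hWallis : x ^ 2 * π * (2 * n + 1) ^ 2 ≤ 4 * (n + 1) := by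
    field_simp at hW
    linarith
  -- multiply `hWallis` by `n` and use `4 n (n + 1) ≤ (2 n + 1) ^ 2`
  nlinarith [hWallis, sq_nonneg x, pi_pos]

theorem two_mul_add_one_mul_centralBinom_div_four_pow_sub_one_le_sqrt (n : ℕ) :
    (2 * n + 1) * ((centralBinom n : ℝ) / 4 ^ n) - 1 ≤ √(2 * (2 * n) / π) := by
  set x := (centralBinom n : ℝ) / 4 ^ n
  have hx1 : x ≤ 1 := by
    rw [div_le_one (by positivity)]
    exact_mod_cast centralBinom_le_four_pow n
  have hsq : (2 * n * x) ^ 2 ≤ 2 * (2 * n) / π := by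
    rw [le_div_iff₀ pi_pos]
    nlinarith [sq_centralBinom_div_four_pow_mul_le_one n, (Nat.cast_nonneg n : (0 : ℝ) ≤ n)]
  calc (2 * n + 1) * x - 1 ≤ 2 * n * x := by linarith
    _ ≤ √(2 * (2 * n) / π) := (le_abs_self _).trans (Real.abs_le_sqrt hsq)

theorem stmt16_general (m : ℕ) :
    (∑ r ∈ Finset.range (m+1), (r : ℝ) * returnsPMF m r) =
        (2*(m:ℝ) + 1) * (Nat.choose (2*m) m : ℝ) / 2^(2*m) - 1 ∧
    (∑ r ∈ Finset.range (m+1), (r : ℝ) * returnsPMF m r) ≤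
        Real.sqrt (2 * (2*(m:ℝ)) / Real.pi) := by
  have hmean : ∑ r ∈ range (m + 1), (r : ℝ) * returnsPMF m r
      = (2 * (m : ℝ) + 1) * (2 * m).choose m / 2 ^ (2 * m) - 1 := by
    rw [← sum_range_succ_mul_returnsPMF,
      sum_congr rfl fun (r : ℕ) _ => add_one_mul (r : ℝ) (returnsPMF m r), sum_add_distrib,
      sum_range_returnsPMF, add_sub_cancel_right]
  refine ⟨hmean, hmean ▸ ?_⟩
  have hbound := two_mul_add_one_mul_centralBinom_div_four_pow_sub_one_le_sqrt m
  rwa [centralBinom_eq_two_mul_choose, mul_div_assoc',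
    show (4 : ℝ) ^ m = 2 ^ (2 * m) by rw [pow_mul]; norm_num] at hbound

theorem stmt16 (m : ℕ) (hm : 0 < m) :
    (∑ r ∈ Finset.range (m+1), (r : ℝ) * returnsPMF m r) =
        (2*(m:ℝ) + 1) * (Nat.choose (2*m) m : ℝ) / 2^(2*m) - 1 ∧
    (∑ r ∈ Finset.range (m+1), (r : ℝ) * returnsPMF m r) ≤
        Real.sqrt (2 * (2*(m:ℝ)) / Real.pi) :=
  stmt16_general m
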